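/- Let Φ ∈ ℝ^{m×d} have full column rank, let D = diag(μ) for a strictly positive probability vector μ, and let P ∈ ℝ^{m×m} be a row-stochastic matrix (nonnegative entries, rows summing to 1). Suppose the column space of Φ is invariant under P, i.e., for every x ∈ ℝ^d there exists x' ∈ ℝ^d with PΦx = Φx'. Let M = (ΦᵀDΦ)^{-1} Φᵀ D P Φ. Then for every integer t ≥ 0 and every x ∈ ℝ^d, ‖Φ Mᵗ x‖_∞ ≤ ‖Φ x‖_∞. -/
import Mathlib


open Matrix Finset

/-- Non-expansiveness of the population FQI iteration matrix under policy
completeness: if `Φ` has full column rank, `D = diag μ` with `μ` strictly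
positive summing to 1, `P` is row-stochastic, and the column space of `Φ` is
invariant under `P`, then for `M = (ΦᵀDΦ)⁻¹ ΦᵀDPΦ` we have
`‖Φ Mᵗ x‖_∞ ≤ ‖Φ x‖_∞` for all `t` and `x`. -/
theorem stmt4 {m d : ℕ} (Φ : Matrix (Fin m) (Fin d) ℝ) (μ : Fin m → ℝ)
    (P : Matrix (Fin m) (Fin m) ℝ)
    (hrank : Function.Injective Φ.mulVec)
    (hμ0 : ∀ i, 0 < μ i) (hμ1 : ∑ i, μ i = 1)
    (hP0 : ∀ i j, 0 ≤ P i j) (hP1 : ∀ i, ∑ j, P i j = 1)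
    (hinv : ∀ x : Fin d → ℝ, ∃ x' : Fin d → ℝ,
      P.mulVec (Φ.mulVec x) = Φ.mulVec x') :
    ∀ (t : ℕ) (x : Fin d → ℝ) (c : ℝ),
      (∀ j, |Φ.mulVec x j| ≤ c) →
        ∀ i, |Φ.mulVec
          ((((Φᵀ * Matrix.diagonal μ * Φ)⁻¹ * (Φᵀ * Matrix.diagonal μ * P * Φ)) ^ t).mulVec x)
            i| ≤ c := by
  set A := Φᵀ * Matrix.diagonal μ * Φ with hA
  set B := Φᵀ * Matrix.diagonal μ * P * Φ with hB
  set M := A⁻¹ * B with hM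
  -- A is injective (as a linear map), hence invertible
  have hker : ∀ v : Fin d → ℝ, A.mulVec v = 0 → v = 0 := by
    intro v hv
    have h0 : v ⬝ᵥ A.mulVec v = 0 := by rw [hv]; simp
    have hexp : v ⬝ᵥ A.mulVec v = ∑ i, μ i * (Φ.mulVec v i)^2 := by
      have h1 : A.mulVec v = Φᵀ.mulVec ((Matrix.diagonal μ).mulVec (Φ.mulVec v)) := by
        rw [hA, Matrix.mulVec_mulVec, Matrix.mulVec_mulVec]
      rw [h1, Matrix.dotProduct_mulVec, Matrix.vecMul_transpose]
      simp only [dotProduct, Matrix.mulVec_diagonal]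
      apply Finset.sum_congr rfl; intro i _; ring
    have hsum : ∑ i, μ i * (Φ.mulVec v i)^2 = 0 := by rw [← hexp, h0]
    have hterm : ∀ i ∈ Finset.univ, (0:ℝ) ≤ μ i * (Φ.mulVec v i)^2 := by
      intro i _; exact mul_nonneg (hμ0 i).le (sq_nonneg _)
    have hz : ∀ i, Φ.mulVec v i = 0 := by
      intro i
      have := (Finset.sum_eq_zero_iff_of_nonneg hterm).mp hsum i (by simp)
      have := mul_eq_zero.mp this
      rcases this with h | h
      · exact absurd h (ne_of_gt (hμ0 i))
      · exact pow_eq_zero_iff (by norm_num) |>.mp h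
    have : Φ.mulVec v = Φ.mulVec 0 := by
      funext i; simp [hz i, Matrix.mulVec_zero]
    exact hrank this
  have hAinj : Function.Injective A.mulVec := by
    intro u v huv
    have : A.mulVec (u - v) = 0 := by
      rw [Matrix.mulVec_sub, huv, sub_self]
    exact sub_eq_zero.mp (hker _ this)
  have hdet : IsUnit A.det := by
    exact (Matrix.isUnit_iff_isUnit_det A).mp (Matrix.mulVec_injective_iff_isUnit.mp hAinj)
  -- key identity
  have hkey : ∀ x : Fin d → ℝ, Φ.mulVec (M.mulVec x) = P.mulVec (Φ.mulVec x) := by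
    intro x
    obtain ⟨x', hx'⟩ := hinv x
    have hAM : A * M = B := by
      rw [hM, ← Matrix.mul_assoc, Matrix.mul_nonsing_inv A hdet, Matrix.one_mul]
    have h1 : A.mulVec (M.mulVec x) = A.mulVec x' := by
      rw [Matrix.mulVec_mulVec, hAM, hB, hA]
      have : (Φᵀ * Matrix.diagonal μ * P * Φ).mulVec x
          = (Φᵀ * Matrix.diagonal μ).mulVec (P.mulVec (Φ.mulVec x)) := by
        rw [Matrix.mulVec_mulVec, Matrix.mulVec_mulVec, Matrix.mul_assoc]
      rw [this, hx', Matrix.mulVec_mulVec]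
    have := hAinj h1
    rw [this, hx']
  -- nonexpansiveness of P
  have hPne : ∀ (y : Fin m → ℝ) (c : ℝ), (∀ j, |y j| ≤ c) → ∀ i, |P.mulVec y i| ≤ c := by
    intro y c hy i
    calc |P.mulVec y i| = |∑ j, P i j * y j| := by simp [Matrix.mulVec, dotProduct]
      _ ≤ ∑ j, |P i j * y j| := Finset.abs_sum_le_sum_abs _ _
      _ = ∑ j, P i j * |y j| := by
          apply Finset.sum_congr rfl; intro j _
          rw [abs_mul, abs_of_nonneg (hP0 i j)]
      _ ≤ ∑ j, P i j * c := by
          apply Finset.sum_le_sum; intro j _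
          exact mul_le_mul_of_nonneg_left (hy j) (hP0 i j)
      _ = c := by rw [← Finset.sum_mul, hP1 i, one_mul]
  intro t
  induction t with
  | zero => intro x c hx i; simpa using hx i
  | succ t ih =>
    intro x c hx i
    have : (M ^ (t + 1)).mulVec x = (M ^ t).mulVec (M.mulVec x) := by
      rw [pow_succ, ← Matrix.mulVec_mulVec]
    rw [this]
    exact ih (M.mulVec x) c (fun j => by rw [hkey]; exact hPne _ c hx j) i
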